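/- arXiv:1404.0390 — 5 statements merged into one kernel-verified Lean document; each statement's English description precedes it below -/
import Mathlib

section
/- Let L ≥ 1, k ≥ 2, c ≥ 1 be natural numbers, and let x : ℕ → ZMod (2^64) be L-periodic (x (i + L) = x i for all i). Suppose x is k-dimensionally equidistributed over its period: for every k-tuple t : Fin k → ZMod (2^64), the number of indices i ∈ {0, …, L-1} such that x (i + j) = t j for all j < k equals c if t is not the zero tuple, and equals c - 1 if t is the zero tuple. Define y : ℕ → ZMod (2^64) by y i = x i + x (i + 1). Then y is (k-1)-dimensionally equidistributed: for every (k-1)-tuple u : Fin (k-1) → ZMod (2^64), the number of indices i ∈ {0, …, L-1} such that y (i + j) = u j for all j < k-1 equals 2^64 · c if u is not the zero tuple, and equals 2^64 · c - 1 if u is the zero tuple. -/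
/-!
A window `(x i, …, x (i+k-1))` of the xorshift output is recovered from its first entry `x i`
together with the window `(y i, …, y (i+k-2))` of consecutive sums, by solving
`x (i+j+1) = y (i+j) - x (i+j)`. So `t ↦ (t 0, consecutive sums of t)` is a bijection
`G^k ≃ G × G^(k-1)` fixing zero, and counting the `y`-windows equal to `u` amounts to summing the
`x`-window counts over the `|G|` preimages `(a, u)`, exactly one of which is zero when `u = 0`.
-/

open Finset

/-- The zero value is the exception because a linear generator never reaches its zero state. -/
def IsEquidistributed {ι A : Type*} [Zero A] [DecidableEq A] (s : Finset ι) (w : ι → A) (c : ℕ) :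
    Prop :=
  ∀ a, #{i ∈ s | w i = a} = if a = 0 then c - 1 else c

namespace IsEquidistributed

variable {ι A : Type*} [Zero A] [DecidableEq A] {s : Finset ι} {w : ι → A} {c : ℕ}

theorem comp_equiv {A' : Type*} [Zero A'] [DecidableEq A'] (h : IsEquidistributed s w c)
    (e : A ≃ A') (he : e 0 = 0) : IsEquidistributed s (e ∘ w) c := by
  intro a'
  have hzero : e.symm a' = 0 ↔ a' = 0 := by rw [Equiv.symm_apply_eq, he, eq_comm]
  simpa only [Function.comp_apply, ← Equiv.eq_symm_apply, hzero] using h (e.symm a')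

theorem snd {K B : Type*} [Zero K] [Zero B] [Fintype K] [DecidableEq K] [DecidableEq B]
    {w : ι → K × B} (h : IsEquidistributed s w c) (hc : 1 ≤ c) :
    IsEquidistributed s (fun i => (w i).2) (Fintype.card K * c) := by
  intro b
  have hfiber : #{i ∈ s | (w i).2 = b} = ∑ a : K, if (a, b) = 0 then c - 1 else c := by
    rw [card_eq_sum_card_fiberwise (f := fun i => (w i).1) (t := univ) (fun _ _ => mem_univ _)]
    refine sum_congr rfl fun a _ => ?_
    rw [filter_filter, ← h (a, b)]
    simp only [Prod.ext_iff, and_comm]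
  rw [hfiber]
  by_cases hb : b = 0
  · have hK : 0 < Fintype.card K := Fintype.card_pos
    rw [if_pos hb, ← add_sum_erase _ _ (mem_univ 0), if_pos (by simp [hb]),
      sum_congr rfl fun a ha => if_neg fun hab => ne_of_mem_erase ha (Prod.ext_iff.mp hab).1,
      sum_const, card_erase_of_mem (mem_univ _), card_univ, smul_eq_mul]
    have hcK : c ≤ Fintype.card K * c := Nat.le_mul_of_pos_left c hK
    rw [Nat.sub_one_mul]
    omega
  · rw [if_neg hb, sum_congr rfl fun a _ => if_neg fun hab => hb (Prod.ext_iff.mp hab).2,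
      sum_const, card_univ, smul_eq_mul]

end IsEquidistributed

def consecutiveSumEquiv (G : Type*) [AddCommGroup G] (n : ℕ) :
    (Fin (n + 1) → G) ≃+ G × (Fin n → G) where
  toFun t := (t 0, fun j => t j.castSucc + t j.succ)
  invFun p := Fin.induction p.1 fun j v => p.2 j - v
  left_inv t := by
    funext i
    induction i using Fin.induction with
    | zero => rfl
    | succ j ih => simp only [Fin.induction_succ, ih, add_sub_cancel_left]
  right_inv p := by
    ext j
    · rfl
    · simp only [Fin.induction_succ, add_sub_cancel]
  map_add' t s := by
    ext j
    · rfl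
    · simp only [Pi.add_apply, Prod.snd_add]
      abel

theorem xorshift_plus_equidistribution_general
    (L k c : ℕ) (hk : 2 ≤ k) (hc : 1 ≤ c)
    (x : ℕ → ZMod (2 ^ 64))
    (hequi : ∀ t : Fin k → ZMod (2 ^ 64),
      ((Finset.range L).filter (fun i => ∀ j : Fin k, x (i + j.val) = t j)).card
        = if t = 0 then c - 1 else c) :
    ∀ u : Fin (k - 1) → ZMod (2 ^ 64),
      ((Finset.range L).filter
          (fun i => ∀ j : Fin (k - 1), x (i + j.val) + x (i + j.val + 1) = u j)).card
        = if u = 0 then 2 ^ 64 * c - 1 else 2 ^ 64 * c := by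
  obtain ⟨n, rfl⟩ : ∃ n, k = n + 1 := ⟨k - 1, by omega⟩
  intro u
  let window (i : ℕ) : Fin (n + 1) → ZMod (2 ^ 64) := fun j => x (i + j)
  have hwindow : IsEquidistributed (range L) window c := fun t => by
    simpa only [funext_iff] using hequi t
  have hsums := (hwindow.comp_equiv (consecutiveSumEquiv _ n).toEquiv
    (map_zero (consecutiveSumEquiv _ n))).snd hc u
  simp only [ZMod.card] at hsums
  rw [← hsums]
  congr 1
  refine filter_congr fun i _ => ?_
  simp [funext_iff, consecutiveSumEquiv, window, add_assoc]

/-- If an `L`-periodic sequence `x` over `ZMod (2^64)` is `k`-dimensionally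
equidistributed (each nonzero `k`-tuple appears `c` times over the period, the
zero tuple `c - 1` times), then the sequence `y i = x i + x (i+1)` is
`(k-1)`-dimensionally equidistributed with multiplicity `2^64 * c`. -/
theorem xorshift_plus_equidistribution
    (L k c : ℕ) (hL : 1 ≤ L) (hk : 2 ≤ k) (hc : 1 ≤ c)
    (x : ℕ → ZMod (2 ^ 64)) (hper : ∀ i, x (i + L) = x i)
    (hequi : ∀ t : Fin k → ZMod (2 ^ 64),
      ((Finset.range L).filter (fun i => ∀ j : Fin k, x (i + j.val) = t j)).card
        = if t = 0 then c - 1 else c) :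
    ∀ u : Fin (k - 1) → ZMod (2 ^ 64),
      ((Finset.range L).filter
          (fun i => ∀ j : Fin (k - 1), x (i + j.val) + x (i + j.val + 1) = u j)).card
        = if u = 0 then 2 ^ 64 * c - 1 else 2 ^ 64 * c :=
  xorshift_plus_equidistribution_general L k c hk hc x hequi
end

section
/- Let n ≥ 64 and set L = 2^n - 1. Let x : ℕ → ZMod (2^64) be L-periodic (x (i + L) = x i for all i) and 1-dimensionally equidistributed over its period: every nonzero value v ∈ ZMod (2^64) satisfies |{ i < L : x i = v }| = 2^(n-64), while |{ i < L : x i = 0 }| = 2^(n-64) - 1. Then for every bit position b < 64, the bit sequence i ↦ Nat.testBit (x i).val b has minimal period exactly L; that is, the least p > 0 such that Nat.testBit (x (i + p)).val b = Nat.testBit (x i).val b for all i, is L = 2^n - 1. -/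
set_option maxRecDepth 2000

section Aux

variable {f : ℕ → Bool}

private lemma per_mul (a : ℕ) (ha : ∀ i, f (i + a) = f i) :
    ∀ k i, f (i + a * k) = f i := by
  intro k
  induction k with
  | zero => simp
  | succ k ih =>
    intro i
    have : i + a * (k + 1) = (i + a * k) + a := by ring
    rw [this, ha, ih]

private lemma per_mod {a b : ℕ} (ha : ∀ i, f (i + a) = f i) (hb : ∀ i, f (i + b) = f i) :
    ∀ i, f (i + b % a) = f i := by
  intro i
  have h : b % a + a * (b / a) = b := Nat.mod_add_div b a
  have := per_mul a ha (b / a) (i + b % a)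
  rw [Nat.add_assoc, h] at this
  rw [← this, hb]

private lemma per_gcd : ∀ {a b : ℕ}, (∀ i, f (i + a) = f i) → (∀ i, f (i + b) = f i) →
    ∀ i, f (i + Nat.gcd a b) = f i := by
  intro a b
  induction a, b using Nat.gcd.induction with
  | H0 n => intro _ hb; simpa using hb
  | H1 m n hm ih =>
    intro ha hb
    rw [Nat.gcd_rec]
    exact ih (per_mod ha hb) ha

private lemma count_mul {d : ℕ} (hd : ∀ i, f (i + d) = f i) :
    ∀ k, ((Finset.range (d * k)).filter (fun i => f i = true)).card
      = k * ((Finset.range d).filter (fun i => f i = true)).card := by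
  have cardsum : ∀ m, ((Finset.range m).filter (fun i => f i = true)).card
      = ∑ i ∈ Finset.range m, (if f i = true then 1 else 0) := by
    intro m; rw [Finset.card_filter]
  intro k
  induction k with
  | zero => simp
  | succ k ih =>
    rw [cardsum] at ih ⊢
    have hsplit : d * (k + 1) = d * k + d := by ring
    rw [hsplit, Finset.range_eq_Ico,
      ← Finset.sum_Ico_consecutive (fun i => if f i = true then 1 else 0)
        (Nat.zero_le (d * k)) (Nat.le_add_right (d * k) d)]
    have h2 : ∑ i ∈ Finset.Ico (d * k) (d * k + d), (if f i = true then 1 else 0)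
        = ∑ i ∈ Finset.range d, (if f i = true then 1 else 0) := by
      rw [Finset.sum_Ico_eq_sum_range]
      simp only [Nat.add_sub_cancel_left]
      refine Finset.sum_congr rfl fun i _ => ?_
      have : d * k + i = i + d * k := by ring
      rw [this, per_mul d hd k i]
    rw [h2, ← Finset.range_eq_Ico, ih, cardsum]
    ring

private lemma count_testBit (b : ℕ) (hb : b < 64) :
    ((Finset.range (2 ^ 64)).filter (fun m => Nat.testBit m b = true)).card = 2 ^ 63 := by
  have key : ((Finset.range (2 ^ 64)).filter (fun m => Nat.testBit m b = true)).card
      = ((Finset.range (2 ^ 64)).filter (fun m => ¬ (Nat.testBit m b = true))).card := by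
    have h2b : (2 : ℕ) ^ b < 2 ^ 64 := Nat.pow_lt_pow_right one_lt_two hb
    refine Finset.card_bij' (fun m _ => m ^^^ 2 ^ b) (fun m _ => m ^^^ 2 ^ b)
      ?_ ?_ ?_ ?_
    · intro m hm
      rw [Finset.mem_filter, Finset.mem_range] at hm
      refine Finset.mem_filter.mpr ⟨Finset.mem_range.mpr ?_, ?_⟩
      · exact Nat.xor_lt_two_pow hm.1 h2b
      · simp [Nat.testBit_xor, Nat.testBit_two_pow_self, hm.2]
    · intro m hm
      rw [Finset.mem_filter, Finset.mem_range] at hm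
      have hm2 : Nat.testBit m b = false := by
        simpa [Bool.not_eq_true] using hm.2
      refine Finset.mem_filter.mpr ⟨Finset.mem_range.mpr ?_, ?_⟩
      · exact Nat.xor_lt_two_pow hm.1 h2b
      · simp [Nat.testBit_xor, Nat.testBit_two_pow_self, hm2]
    · intro m _; simp [Nat.xor_assoc]
    · intro m _; simp [Nat.xor_assoc]
  have total := Finset.card_filter_add_card_filter_not
    (s := Finset.range (2 ^ 64)) (fun m => Nat.testBit m b = true)
  rw [Finset.card_range] at total
  have : (2 : ℕ) ^ 64 = 2 ^ 63 + 2 ^ 63 := by norm_num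
  omega

private lemma zmod_count (P : ℕ → Prop) [DecidablePred P] :
    ((Finset.univ : Finset (ZMod (2 ^ 64))).filter (fun v => P v.val)).card
      = ((Finset.range (2 ^ 64)).filter P).card := by
  haveI : NeZero ((2 : ℕ) ^ 64) := ⟨by positivity⟩
  apply Finset.card_bij (fun v _ => v.val)
  · intro v hv
    simp only [Finset.mem_filter, Finset.mem_range] at hv ⊢
    exact ⟨ZMod.val_lt v, hv.2⟩
  · intro a _ b _ h
    exact ZMod.val_injective _ h
  · intro m hm
    simp only [Finset.mem_filter, Finset.mem_range] at hm
    refine ⟨(m : ZMod (2 ^ 64)), ?_, ZMod.val_cast_of_lt hm.1⟩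
    simp [Finset.mem_filter, ZMod.val_cast_of_lt hm.1, hm.2]

end Aux

/-- Every bit of a full-period (`L = 2^n - 1`-periodic, `1`-dimensionally
equidistributed) sequence over `ZMod (2^64)` has minimal period exactly `L`. -/
theorem every_bit_has_full_period
    (n : ℕ) (hn : 64 ≤ n) (L : ℕ) (hL : L = 2 ^ n - 1)
    (x : ℕ → ZMod (2 ^ 64)) (hper : ∀ i, x (i + L) = x i)
    (hequi : ∀ v : ZMod (2 ^ 64), v ≠ 0 →
      ((Finset.range L).filter (fun i => x i = v)).card = 2 ^ (n - 64))
    (hzero : ((Finset.range L).filter (fun i => x i = 0)).card = 2 ^ (n - 64) - 1) :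
    ∀ b < 64,
      IsLeast {p : ℕ | 0 < p ∧
        ∀ i, Nat.testBit (x (i + p)).val b = Nat.testBit (x i).val b} L := by
  intro b hb
  haveI : NeZero ((2 : ℕ) ^ 64) := ⟨by positivity⟩
  have h2n : (1 : ℕ) ≤ 2 ^ n := Nat.one_le_two_pow
  have hLpos : 0 < L := by
    rw [hL]
    have : (2 : ℕ) ^ 64 ≤ 2 ^ n := Nat.pow_le_pow_right (by norm_num) hn
    omega
  -- the bit sequence
  set f : ℕ → Bool := fun i => Nat.testBit (x i).val b with hf
  have hLper : ∀ i, f (i + L) = f i := fun i => by simp [hf, hper i]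
  -- count of ones over one period
  have hones : ((Finset.range L).filter (fun i => f i = true)).card = 2 ^ (n - 1) := by
    classical
    set t : Finset (ZMod (2 ^ 64)) :=
      Finset.univ.filter (fun v => Nat.testBit v.val b = true) with ht
    have hmem : ∀ i ∈ (Finset.range L).filter (fun i => f i = true), x i ∈ t := by
      intro i hi
      simp only [Finset.mem_filter, Finset.mem_range, hf] at hi
      simp [ht, hi.2]
    have hcard := Finset.card_eq_sum_card_fiberwise hmem
    have hfiber : ∀ v ∈ t,
        (((Finset.range L).filter (fun i => f i = true)).filter (fun i => x i = v)).card
          = 2 ^ (n - 64) := by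
      intro v hv
      simp only [ht, Finset.mem_filter, Finset.mem_univ, true_and] at hv
      have hvne : v ≠ 0 := by
        intro h
        rw [h] at hv
        simp [ZMod.val_zero] at hv
      rw [Finset.filter_filter]
      have : ((Finset.range L).filter (fun i => f i = true ∧ x i = v))
          = (Finset.range L).filter (fun i => x i = v) := by
        apply Finset.filter_congr
        intro i _
        constructor
        · exact fun h => h.2
        · intro h; exact ⟨by simp [hf, h, hv], h⟩
      rw [this]
      exact hequi v hvne
    rw [hcard, Finset.sum_congr rfl hfiber, Finset.sum_const, smul_eq_mul]
    have htcard : t.card = 2 ^ 63 := by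
      rw [ht]
      rw [zmod_count (fun m => Nat.testBit m b = true)]
      exact count_testBit b hb
    have hexp : (63 : ℕ) + (n - 64) = n - 1 := by omega
    rw [htcard, ← pow_add, hexp]
  constructor
  · -- L is a period
    exact ⟨hLpos, fun i => hLper i⟩
  · -- L is a lower bound
    rintro p ⟨hppos, hpper⟩
    by_contra hlt
    push_neg at hlt
    set d := Nat.gcd p L with hd
    have hdper : ∀ i, f (i + d) = f i := per_gcd hpper hLper
    have hdpos : 0 < d := Nat.gcd_pos_of_pos_left L hppos
    have hdL : d ∣ L := Nat.gcd_dvd_right p L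
    have hdlt : d < L := lt_of_le_of_lt (Nat.gcd_le_left L hppos) hlt
    set k := L / d with hk
    have hLdk : d * k = L := Nat.mul_div_cancel' hdL
    have hcount := count_mul hdper k
    rw [hLdk, hones] at hcount
    have hkdvd : k ∣ 2 ^ (n - 1) := ⟨_, hcount⟩
    have hLodd : Odd L := by
      rw [hL]
      exact Nat.Even.sub_odd h2n (by
        rw [Nat.even_pow]
        exact ⟨even_two, by omega⟩) odd_one
    have hkodd : Odd k := by
      by_contra h
      rw [Nat.not_odd_iff_even] at h
      obtain ⟨c, hc⟩ := dvd_trans h.two_dvd (Nat.div_dvd_of_dvd hdL)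
      rcases hLodd with ⟨m, hm⟩
      omega
    have hk1 : k = 1 :=
      (Nat.coprime_two_right.mpr hkodd).pow_right (n - 1) |>.eq_one_of_dvd hkdvd
    rw [hk1, Nat.mul_one] at hLdk
    omega
end

section
/- Let L ≥ 1, c ≥ 1 and let x : ℕ → ZMod (2^64) be a sequence such that every nonzero value v ∈ ZMod (2^64) satisfies |{ i < L : x i = v }| = c, while |{ i < L : x i = 0 }| = c - 1. Then for every bit position b < 64, the number of indices i < L with Nat.testBit (x i).val b = true equals 2^63 · c. -/
lemma testbit_count (b : ℕ) (hb : b < 64) :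
    ((Finset.range (2^64)).filter (fun n => n.testBit b = true)).card = 2^63 := by
  classical
  set A := (Finset.range (2^64)).filter (fun n => n.testBit b = true) with hA
  set B := (Finset.range (2^64)).filter (fun n => ¬ (n.testBit b = true)) with hB
  have hsum : A.card + B.card = 2^64 := by
    rw [hA, hB, Finset.card_filter_add_card_filter_not, Finset.card_range]
  have hcardeq : A.card = B.card := by
    apply Finset.card_bij (fun n _ => n ^^^ 2^b)
    · intro n hn
      simp only [hA, Finset.mem_filter, Finset.mem_range] at hn
      simp only [hB, Finset.mem_filter, Finset.mem_range]
      constructor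
      · exact Nat.xor_lt_two_pow hn.1 (Nat.pow_lt_pow_right one_lt_two hb)
      · simp [Nat.testBit_xor, hn.2]
    · intro a ha a' ha' h
      have := congrArg (fun m => m ^^^ 2^b) h
      simpa [Nat.xor_assoc] using this
    · intro n hn
      refine ⟨n ^^^ 2^b, ?_, by simp [Nat.xor_assoc]⟩
      simp only [hB, Finset.mem_filter, Finset.mem_range] at hn
      simp only [hA, Finset.mem_filter, Finset.mem_range]
      constructor
      · exact Nat.xor_lt_two_pow hn.1 (Nat.pow_lt_pow_right one_lt_two hb)
      · simp [Nat.testBit_xor]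
        simpa using hn.2
  omega

lemma zmod_testbit_count (b : ℕ) (hb : b < 64) :
    (Finset.univ.filter (fun v : ZMod (2^64) => (ZMod.val v).testBit b = true)).card = 2^63 := by
  classical
  rw [← testbit_count b hb]
  apply Finset.card_bij (fun v _ => ZMod.val v)
  · intro v hv
    simp only [Finset.mem_filter, Finset.mem_range, Finset.mem_univ, true_and] at *
    exact ⟨ZMod.val_lt v, hv⟩
  · intro a _ a' _ h
    exact ZMod.val_injective _ h
  · intro n hn
    simp only [Finset.mem_filter, Finset.mem_range] at hn
    refine ⟨(n : ZMod (2^64)), ?_, ?_⟩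
    · simp only [Finset.mem_filter, Finset.mem_univ, true_and]
      rw [ZMod.val_natCast_of_lt hn.1]; exact hn.2
    · rw [ZMod.val_natCast_of_lt hn.1]

/-- Over a full period of a `1`-dimensionally equidistributed sequence (each
nonzero word appears `c` times among positions `i < L`, the zero word `c - 1`
times), each bit position `b < 64` takes the value `1` exactly `2^63 * c`
times. -/
theorem bit_count_of_equidistributed
    (L c : ℕ) (hL : 1 ≤ L) (hc : 1 ≤ c)
    (x : ℕ → ZMod (2 ^ 64))
    (hequi : ∀ v : ZMod (2 ^ 64), v ≠ 0 →
      ((Finset.range L).filter (fun i => x i = v)).card = c)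
    (hzero : ((Finset.range L).filter (fun i => x i = 0)).card = c - 1) :
    ∀ b < 64,
      ((Finset.range L).filter (fun i => Nat.testBit (x i).val b = true)).card
        = 2 ^ 63 * c := by
  classical
  intro b hb
  set V := Finset.univ.filter (fun v : ZMod (2^64) => (ZMod.val v).testBit b = true) with hV
  have hS : (Finset.range L).filter (fun i => Nat.testBit (x i).val b = true)
      = V.biUnion (fun v => (Finset.range L).filter (fun i => x i = v)) := by
    ext i
    simp only [Finset.mem_biUnion, Finset.mem_filter, Finset.mem_range, hV,
      Finset.mem_univ, true_and]
    constructor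
    · rintro ⟨hi, ht⟩
      exact ⟨x i, ht, hi, rfl⟩
    · rintro ⟨v, hv, hi, rfl⟩
      exact ⟨hi, hv⟩
  rw [hS, Finset.card_biUnion]
  · have hnonzero : ∀ v ∈ V, v ≠ 0 := by
      intro v hv h0
      simp only [hV, Finset.mem_filter] at hv
      rw [h0] at hv
      simp [ZMod.val_zero] at hv
    calc (∑ v ∈ V, ((Finset.range L).filter (fun i => x i = v)).card)
        = ∑ v ∈ V, c := Finset.sum_congr rfl (fun v hv => hequi v (hnonzero v hv))
      _ = V.card * c := by rw [Finset.sum_const, smul_eq_mul]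
      _ = 2^63 * c := by rw [hV, zmod_testbit_count b hb]
  · intro u hu v hv huv
    simp only [Finset.disjoint_left, Finset.mem_filter]
    rintro i ⟨_, h1⟩ ⟨_, h2⟩
    exact huv (h1 ▸ h2 ▸ rfl)
end

section
/- Let M be an n × n matrix over Z/2Z with n ≥ 1, let P = charpoly M, let j be a natural number, and let Q = X^j %ₘ P with coefficients α_i = Q.coeff i (so α_i = 0 for i ≥ n). Then for every row vector v : Fin n → ZMod 2, the state after j steps satisfies v ·ᵥ M^j = ∑_{i=0}^{n-1} α_i • (v ·ᵥ M^i), where v ·ᵥ A denotes the vector-matrix product Matrix.vecMul v A. -/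
open Polynomial

namespace Matrix

variable {ι R : Type*} [Fintype ι] [DecidableEq ι] [CommRing R] [Nontrivial R] [Nonempty ι]

theorem natDegree_modByMonic_charpoly_lt (M : Matrix ι ι R) (p : R[X]) :
    (p %ₘ M.charpoly).natDegree < Fintype.card ι := by
  have hcharpoly_ne_one : M.charpoly ≠ 1 := fun h =>
    Fintype.card_pos.ne (by simpa [h] using M.charpoly_natDegree_eq_dim)
  simpa using natDegree_modByMonic_lt p M.charpoly_monic hcharpoly_ne_one

theorem pow_eq_sum_coeff_mod_charpoly_smul_pow (M : Matrix ι ι R) (k : ℕ) :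
    M ^ k = ∑ i ∈ Finset.range (Fintype.card ι), (X ^ k %ₘ M.charpoly).coeff i • M ^ i := by
  rw [pow_eq_aeval_mod_charpoly,
    aeval_eq_sum_range' (M.natDegree_modByMonic_charpoly_lt _)]

end Matrix

/-- Jump-ahead formula: with `Q = X^j %ₘ charpoly M` and `α_i = Q.coeff i`,
for every row vector `v` one has `v ⬝ M^j = ∑_{i<n} α_i • (v ⬝ M^i)`. -/
theorem jump_ahead_formula
    (n : ℕ) (hn : 1 ≤ n) (M : Matrix (Fin n) (Fin n) (ZMod 2)) (j : ℕ)
    (Q : Polynomial (ZMod 2)) (hQ : Q = (Polynomial.X ^ j : Polynomial (ZMod 2)) %ₘ M.charpoly)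
    (v : Fin n → ZMod 2) :
    Matrix.vecMul v (M ^ j)
      = ∑ i ∈ Finset.range n, Q.coeff i • Matrix.vecMul v (M ^ i) := by
  have : NeZero n := ⟨Nat.one_le_iff_ne_zero.mp hn⟩
  rw [M.pow_eq_sum_coeff_mod_charpoly_smul_pow j, Fintype.card_fin, Matrix.vecMul_sum, hQ]
  simp only [Matrix.vecMul_smul]
end

section
/- Define the 6-bit xorshift step f : BitVec 3 × BitVec 3 → BitVec 3 × BitVec 3 with shifts a = 1, b = 2, c = 1 by f (x, y) = (y, (t ^^^ (t >>> 2)) ^^^ (y ^^^ (y >>> 1))) where t = x ^^^ (x <<< 1), and define the associated xorshift+ output of a state s = (x, y) as o s = (f s).2 + y (addition of 3-bit words modulo 8). Let s₀ = (1, 0), s_{i+1} = f s_i, and o_i = o s_i. Then the pair of consecutive outputs (0, 0) occurs at least twice over the full period: there exist indices i < j < 63 such that o_i = 0, o_{i+1} = 0, o_j = 0, and o_{j+1} = 0. Hence this xorshift+ generator is not 2-dimensionally equidistributed. -/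
/-- The 6-bit xorshift step with 3-bit shifts `a = 1, b = 2, c = 1`. -/
def xorshiftStep (s : BitVec 3 × BitVec 3) : BitVec 3 × BitVec 3 :=
  let t := s.1 ^^^ (s.1 <<< 1)
  (s.2, (t ^^^ (t >>> 2)) ^^^ (s.2 ^^^ (s.2 >>> 1)))

/-- The associated xorshift+ output: sum (mod 8) of the currently updated word
and of the lastly updated word of the state. -/
def xorshiftPlusOutput (s : BitVec 3 × BitVec 3) : BitVec 3 :=
  (xorshiftStep s).2 + s.2

/-- Over the full period of the 6-bit xorshift+ generator started at `(1, 0)`,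
the pair of consecutive outputs `(0, 0)` occurs at least twice, so the
generator is not 2-dimensionally equidistributed. -/
theorem xorshift6_plus_not_two_dimensionally_equidistributed :
    ∃ i j : ℕ, i < j ∧ j < 63 ∧
      xorshiftPlusOutput (xorshiftStep^[i] (1, 0)) = 0 ∧
      xorshiftPlusOutput (xorshiftStep^[i + 1] (1, 0)) = 0 ∧
      xorshiftPlusOutput (xorshiftStep^[j] (1, 0)) = 0 ∧
      xorshiftPlusOutput (xorshiftStep^[j + 1] (1, 0)) = 0 := by
  refine ⟨38, 42, by norm_num, by norm_num, ?_, ?_, ?_, ?_⟩ <;>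
    simp only [Function.iterate_succ, Function.iterate_zero, Function.comp_apply, id] <;> decide
end
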